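/- arXiv:1909.09747 — 7 statements merged into one kernel-verified Lean document; each statement's English description precedes it below -/
import Mathlib

section
/- Let H be a real Hilbert space, γ, κ > 0, and let B : H → H be κ-cocoercive with resolvent J_{γB}. Then J_{γB} is θ-averaged with θ = 1/(2(1 + κ/γ)); that is, there exists a nonexpansive map R : H → H such that J_{γB} = (1 − θ)·Id + θ·R. -/
/-!
With `u = J x - J y` and `w = x - y`, the resolvent identity gives `w - u = γ (B (J x) - B (J y))`,
so cocoercivity of `B` becomes `(κ/γ) ‖w - u‖² ≤ ⟪u, w - u⟫`. For `θ = 1/(2(1 + κ/γ))` this is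
exactly `‖u - (1 - θ) w‖ ≤ θ ‖w‖`, i.e. `θ⁻¹ (J - (1 - θ) Id)` is nonexpansive.
-/

open RealInnerProductSpace

theorem norm_sub_one_sub_smul_le_of_inner {E : Type*} [NormedAddCommGroup E]
    [InnerProductSpace ℝ E] {θ μ : ℝ} (hθ : 0 ≤ θ) (hθμ : 2 * θ * (1 + μ) = 1) {u w : E}
    (h : μ * ‖w - u‖ ^ 2 ≤ ⟪u, w - u⟫) :
    ‖u - (1 - θ) • w‖ ≤ θ * ‖w‖ := by
  rw [← sq_le_sq₀ (norm_nonneg _) (by positivity)]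
  rw [norm_sub_sq_real, inner_sub_right, real_inner_self_eq_norm_sq, real_inner_comm] at h
  rw [norm_sub_sq_real, real_inner_smul_right, norm_smul, Real.norm_eq_abs, mul_pow, mul_pow,
    sq_abs]
  -- `θ²‖w‖² - ‖u - (1 - θ) w‖² = 2θ (⟪u, w - u⟫ - μ ‖w - u‖²)` once `2θ(1 + μ) = 1`
  linear_combination 2 * θ * h - (‖w‖ ^ 2 + ‖u‖ ^ 2 - 2 * ⟪u, w⟫) * hθμ

theorem exists_nonexpansive_eq_averaged {E : Type*} [NormedAddCommGroup E] [NormedSpace ℝ E]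
    {θ : ℝ} (hθ : 0 < θ) {T : E → E}
    (hT : ∀ x y, ‖(T x - T y) - (1 - θ) • (x - y)‖ ≤ θ * ‖x - y‖) :
    ∃ R : E → E, (∀ x y, ‖R x - R y‖ ≤ ‖x - y‖) ∧ ∀ x, T x = (1 - θ) • x + θ • R x := by
  refine ⟨fun x => θ⁻¹ • (T x - (1 - θ) • x), fun x y => ?_, fun x => ?_⟩
  · have hRxy : θ⁻¹ • (T x - (1 - θ) • x) - θ⁻¹ • (T y - (1 - θ) • y) =
        θ⁻¹ • ((T x - T y) - (1 - θ) • (x - y)) := by module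
    rw [hRxy, norm_smul, Real.norm_eq_abs, abs_of_pos (inv_pos.mpr hθ), inv_mul_le_iff₀ hθ]
    exact hT x y
  · rw [smul_smul, mul_inv_cancel₀ hθ.ne', one_smul, add_sub_cancel]

theorem resolvent_div_mul_norm_sq_le_inner {H : Type*} [NormedAddCommGroup H]
    [InnerProductSpace ℝ H] {γ κ : ℝ} (hγ : 0 < γ) {B J : H → H}
    (hB : ∀ x y : H, κ * ‖B x - B y‖ ^ 2 ≤ ⟪x - y, B x - B y⟫)
    (hJ : ∀ x : H, x = J x + γ • B (J x)) (x y : H) :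
    κ / γ * ‖(x - y) - (J x - J y)‖ ^ 2 ≤ ⟪J x - J y, (x - y) - (J x - J y)⟫ := by
  have hxy : (x - y) - (J x - J y) = γ • (B (J x) - B (J y)) :=
    calc (x - y) - (J x - J y)
        = (J x + γ • B (J x) - (J y + γ • B (J y))) - (J x - J y) := by rw [← hJ x, ← hJ y]
      _ = γ • (B (J x) - B (J y)) := by module
  rw [hxy, norm_smul, real_inner_smul_right, Real.norm_eq_abs, abs_of_pos hγ]
  calc κ / γ * (γ * ‖B (J x) - B (J y)‖) ^ 2 = γ * (κ * ‖B (J x) - B (J y)‖ ^ 2) := by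
        field_simp
    _ ≤ γ * ⟪J x - J y, B (J x) - B (J y)⟫ := mul_le_mul_of_nonneg_left (hB _ _) hγ.le

theorem fdrf_stmt2_general {H : Type*} [NormedAddCommGroup H] [InnerProductSpace ℝ H]
    (γ κ : ℝ) (hγ : 0 < γ) (hκ : 0 < κ) (B J : H → H)
    (hB : ∀ x y : H, κ * ‖B x - B y‖ ^ 2 ≤ ⟪x - y, B x - B y⟫)
    (hJ : ∀ x : H, x = J x + γ • B (J x)) :
    ∃ R : H → H, (∀ x y : H, ‖R x - R y‖ ≤ ‖x - y‖) ∧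
      ∀ x : H, J x = (1 - 1 / (2 * (1 + κ / γ))) • x + (1 / (2 * (1 + κ / γ))) • R x := by
  have hθ : 0 < 1 / (2 * (1 + κ / γ)) := by positivity
  have hθμ : 2 * (1 / (2 * (1 + κ / γ))) * (1 + κ / γ) = 1 := by field_simp
  exact exists_nonexpansive_eq_averaged hθ fun x y =>
    norm_sub_one_sub_smul_le_of_inner hθ.le hθμ (resolvent_div_mul_norm_sq_le_inner hγ hB hJ x y)

theorem fdrf_stmt2 {H : Type*} [NormedAddCommGroup H] [InnerProductSpace ℝ H] [CompleteSpace H]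
    (γ κ : ℝ) (hγ : 0 < γ) (hκ : 0 < κ) (B J : H → H)
    (hB : ∀ x y : H, κ * ‖B x - B y‖ ^ 2 ≤ ⟪x - y, B x - B y⟫)
    (hJ : ∀ x : H, x = J x + γ • B (J x)) :
    ∃ R : H → H, (∀ x y : H, ‖R x - R y‖ ≤ ‖x - y‖) ∧
      ∀ x : H, J x = (1 - 1 / (2 * (1 + κ / γ))) • x + (1 / (2 * (1 + κ / γ))) • R x :=
  fdrf_stmt2_general γ κ hγ hκ B J hB hJ
end

section
/- Let H be a real Hilbert space, let A, B : H → Set H be maximally monotone with resolvents J_{γA}, J_{γB}, let C : H → H be monotone and μ-Lipschitz with μ > 0, and let γ ∈ (0, 1/μ). Define T : H → H by T z = (Id − γC)(J_{γA}(2 J_{γB} z − z − γ C(J_{γB} z))) + z − (Id − γC)(J_{γB} z). Then zer(A + B + C) = J_{γB}(Fix T), where Fix T = {z ∈ H : T z = z} and zer(A + B + C) = {x ∈ H : 0 ∈ A x + B x + C x} (Minkowski sum). -/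
/-!
Write `R = Id - γC`. If `a + b + C x = 0` with `a ∈ A x`, `b ∈ B x`, then `z = x + γ b` has
`J_{γB} z = x` and `J_{γA}(2x - z - γ C x) = J_{γA}(x + γ a) = x`, so the two `R`-terms in `T z`
cancel and `T z = z`. Conversely, `T z = z` says `R (J_{γA} w) = R (J_{γB} z)` for the argument `w`
of `J_{γA}`; since `γ μ < 1`, `R` is injective, so both resolvents return the same point `x`, and
adding the two resolvent inclusions gives `0 ∈ γ (A x + B x + C x)`.
-/

open RealInnerProductSpace Pointwise

section

variable {H : Type*} [NormedAddCommGroup H] [InnerProductSpace ℝ H]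

def SetValuedMonotone (A : H → Set H) : Prop :=
  ∀ x y u v : H, u ∈ A x → v ∈ A y → 0 ≤ ⟪x - y, u - v⟫

theorem SetValuedMonotone.eq_of_sub_mem_smul {A : H → Set H} (hA : SetValuedMonotone A)
    {γ : ℝ} (hγ : 0 < γ) {z x y : H} (hx : z - x ∈ γ • A x) (hy : z - y ∈ γ • A y) :
    x = y := by
  obtain ⟨u, hu, hux : γ • u = z - x⟩ := hx
  obtain ⟨v, hv, hvy : γ • v = z - y⟩ := hy
  have huv : u - v = γ⁻¹ • -(x - y) := by
    rw [eq_inv_smul_iff₀ hγ.ne', smul_sub, hux, hvy]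
    abel
  have h := hA x y u v hu hv
  rw [huv, real_inner_smul_right, inner_neg_right, real_inner_self_eq_norm_sq] at h
  have hnorm : ‖x - y‖ ^ 2 ≤ 0 := by
    nlinarith [inv_pos.mpr hγ, sq_nonneg ‖x - y‖]
  rw [← sub_eq_zero, ← norm_eq_zero]
  exact pow_eq_zero_iff two_ne_zero |>.mp (le_antisymm hnorm (sq_nonneg _))

theorem injective_sub_smul_of_lipschitz {C : H → H} {γ μ : ℝ} (hγ : 0 ≤ γ) (hγμ : γ * μ < 1)
    (hC : ∀ x y : H, ‖C x - C y‖ ≤ μ * ‖x - y‖) :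
    Function.Injective fun x => x - γ • C x := by
  intro w x hwx
  have hsub : w - x = γ • (C w - C x) := by
    rw [smul_sub]
    exact sub_eq_sub_iff_sub_eq_sub.mp hwx
  have hnorm : ‖w - x‖ ≤ γ * μ * ‖w - x‖ := by
    calc ‖w - x‖ = γ * ‖C w - C x‖ := by rw [hsub, norm_smul, Real.norm_of_nonneg hγ]
      _ ≤ γ * (μ * ‖w - x‖) := mul_le_mul_of_nonneg_left (hC w x) hγ
      _ = γ * μ * ‖w - x‖ := by ring
  have hzero : ‖w - x‖ = 0 := by nlinarith [norm_nonneg (w - x)]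
  exact sub_eq_zero.mp (norm_eq_zero.mp hzero)

end

theorem mem_add_add_singleton_iff {M : Type*} [Add M] {s t : Set M} {c p : M} :
    p ∈ s + t + ({c} : Set M) ↔ ∃ a ∈ s, ∃ b ∈ t, a + b + c = p := by
  simp only [Set.add_singleton, Set.mem_image, Set.mem_add]
  constructor
  · rintro ⟨_, ⟨a, ha, b, hb, rfl⟩, hsum⟩
    exact ⟨a, ha, b, hb, hsum⟩
  · rintro ⟨a, ha, b, hb, hsum⟩
    exact ⟨a + b, ⟨a, ha, b, hb, rfl⟩, hsum⟩

theorem fdrf_stmt3_general {H : Type*} [NormedAddCommGroup H] [InnerProductSpace ℝ H]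
    (A B : H → Set H)
    (hAmono : ∀ x y u v : H, u ∈ A x → v ∈ A y → 0 ≤ ⟪x - y, u - v⟫)
    (hBmono : ∀ x y u v : H, u ∈ B x → v ∈ B y → 0 ≤ ⟪x - y, u - v⟫)
    (γ μ : ℝ) (hμ : 0 < μ) (hγ0 : 0 < γ) (hγ : γ < 1 / μ)
    (JA JB : H → H)
    (hJA : ∀ x : H, x - JA x ∈ γ • A (JA x))
    (hJB : ∀ x : H, x - JB x ∈ γ • B (JB x))
    (C : H → H)
    (hClip : ∀ x y : H, ‖C x - C y‖ ≤ μ * ‖x - y‖)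
    (T : H → H)
    (hT : ∀ z : H, T z =
      (JA ((2 : ℝ) • JB z - z - γ • C (JB z))
          - γ • C (JA ((2 : ℝ) • JB z - z - γ • C (JB z))))
        + z - (JB z - γ • C (JB z))) :
    {x : H | (0 : H) ∈ A x + B x + ({C x} : Set H)} = JB '' {z : H | T z = z} := by
  ext x
  rw [Set.mem_ofPred_eq, mem_add_add_singleton_iff]
  constructor
  · rintro ⟨a, ha, b, hb, hsum⟩
    have hJBz : JB (x + γ • b) = x :=
      SetValuedMonotone.eq_of_sub_mem_smul hBmono hγ0 (hJB _)
        (by rw [add_sub_cancel_left]; exact Set.smul_mem_smul_set hb)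
    have hJAw : JA ((2 : ℝ) • x - (x + γ • b) - γ • C x) = x := by
      refine SetValuedMonotone.eq_of_sub_mem_smul hAmono hγ0 (hJA _) ?_
      rw [show (2 : ℝ) • x - (x + γ • b) - γ • C x - x = γ • a by
        linear_combination (norm := module) (-γ) • hsum]
      exact Set.smul_mem_smul_set ha
    refine ⟨x + γ • b, ?_, hJBz⟩
    rw [Set.mem_ofPred_eq, hT, hJBz, hJAw]
    abel
  · rintro ⟨z, hz, rfl⟩
    set w := (2 : ℝ) • JB z - z - γ • C (JB z)
    have hγμ : γ * μ < 1 := by rwa [lt_div_iff₀ hμ] at hγ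
    have hJAw : JA w = JB z := injective_sub_smul_of_lipschitz hγ0.le hγμ hClip <| by
      have hfix : T z = z := hz
      rw [hT] at hfix
      linear_combination (norm := module) hfix
    obtain ⟨a, ha, hγa : γ • a = w - JA w⟩ := hJA w
    obtain ⟨b, hb, hγb : γ • b = z - JB z⟩ := hJB z
    rw [hJAw] at ha hγa
    refine ⟨a, ha, b, hb, (smul_eq_zero.mp ?_).resolve_left hγ0.ne'⟩
    linear_combination (norm := module) hγa + hγb

theorem fdrf_stmt3 {H : Type*} [NormedAddCommGroup H] [InnerProductSpace ℝ H] [CompleteSpace H]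
    (A B : H → Set H)
    (hAmono : ∀ x y u v : H, u ∈ A x → v ∈ A y → 0 ≤ ⟪x - y, u - v⟫)
    (hAmax : ∀ x u : H, (∀ y v : H, v ∈ A y → 0 ≤ ⟪x - y, u - v⟫) → u ∈ A x)
    (hBmono : ∀ x y u v : H, u ∈ B x → v ∈ B y → 0 ≤ ⟪x - y, u - v⟫)
    (hBmax : ∀ x u : H, (∀ y v : H, v ∈ B y → 0 ≤ ⟪x - y, u - v⟫) → u ∈ B x)
    (γ μ : ℝ) (hμ : 0 < μ) (hγ0 : 0 < γ) (hγ : γ < 1 / μ)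
    (JA JB : H → H)
    (hJA : ∀ x : H, x - JA x ∈ γ • A (JA x))
    (hJB : ∀ x : H, x - JB x ∈ γ • B (JB x))
    (C : H → H)
    (hCmono : ∀ x y : H, 0 ≤ ⟪x - y, C x - C y⟫)
    (hClip : ∀ x y : H, ‖C x - C y‖ ≤ μ * ‖x - y‖)
    (T : H → H)
    (hT : ∀ z : H, T z =
      (JA ((2 : ℝ) • JB z - z - γ • C (JB z))
          - γ • C (JA ((2 : ℝ) • JB z - z - γ • C (JB z))))
        + z - (JB z - γ • C (JB z))) :
    {x : H | (0 : H) ∈ A x + B x + ({C x} : Set H)} = JB '' {z : H | T z = z} :=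
  fdrf_stmt3_general A B hAmono hBmono γ μ hμ hγ0 hγ JA JB hJA hJB C hClip T hT
end

section
/- Let H be a real Hilbert space, let A : H → Set H be monotone, let C : H → H be monotone, and let γ > 0. Suppose z, z⋆, x, y, x⋆ ∈ H satisfy 2x − z − γ C x − y ∈ γ A y and x⋆ − z⋆ − γ C x⋆ ∈ γ A x⋆ (i.e., the second set is the set {γ a : a ∈ A x⋆}). Define u = x − z + z⋆ − x⋆ and z⁺ = z + y − x − γ(C y − C x). Then ‖z⁺ − z⋆‖² ≤ ‖x − x⋆‖² − ‖x − y‖² + γ²‖C x − C y‖² − 2γ⟪C x − C y, u⟫ + ‖u‖². -/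
/-!
Put `p = y - xs`, `q = x - y` and `w = u - γ (C x - C y)`. Then `zp - zs = p - w`, `x - xs = p + q`,
and the right-hand side is `‖p + q‖² - ‖q‖² + ‖w‖²`, which exceeds `‖p - w‖²` by `2 ⟪p, q + w⟫`.
This inner product is `⟪y - xs, a - b⟫` for the elements `a ∈ γ A y + γ C y` and `b ∈ γ A xs + γ C xs`
read off from the two inclusions, so it is nonnegative by monotonicity of `γ (A + C)`.
-/

open RealInnerProductSpace Pointwise

section

variable {H : Type*} [NormedAddCommGroup H] [InnerProductSpace ℝ H]

lemma norm_sub_sq_eq_norm_add_sq_sub (p q w : H) :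
    ‖p - w‖ ^ 2 = ‖p + q‖ ^ 2 - ‖q‖ ^ 2 + ‖w‖ ^ 2 - 2 * ⟪p, q + w⟫ := by
  rw [norm_sub_sq_real, norm_add_sq_real, inner_add_right]
  ring

lemma norm_sub_sq_le_of_inner_add_nonneg {p q w : H} (h : 0 ≤ ⟪p, q + w⟫) :
    ‖p - w‖ ^ 2 ≤ ‖p + q‖ ^ 2 - ‖q‖ ^ 2 + ‖w‖ ^ 2 := by
  rw [norm_sub_sq_eq_norm_add_sq_sub p q w]
  linarith

lemma norm_sub_smul_sq (u d : H) (γ : ℝ) :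
    ‖u - γ • d‖ ^ 2 = γ ^ 2 * ‖d‖ ^ 2 - 2 * γ * ⟪d, u⟫ + ‖u‖ ^ 2 := by
  rw [norm_sub_sq_real, norm_smul, real_inner_smul_right, real_inner_comm, mul_pow,
    Real.norm_eq_abs, sq_abs]
  ring

lemma inner_sub_nonneg_of_mem_smul {A : H → Set H}
    (hA : ∀ x y u v : H, u ∈ A x → v ∈ A y → 0 ≤ ⟪x - y, u - v⟫)
    {γ : ℝ} (hγ : 0 ≤ γ) {x y u v : H} (hu : u ∈ γ • A x) (hv : v ∈ γ • A y) :
    0 ≤ ⟪x - y, u - v⟫ := by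
  obtain ⟨a, ha, rfl⟩ := hu
  obtain ⟨b, hb, rfl⟩ := hv
  rw [← smul_sub, real_inner_smul_right]
  exact mul_nonneg hγ (hA x y a b ha hb)

lemma inner_sub_add_smul_nonneg {A : H → Set H}
    (hA : ∀ x y u v : H, u ∈ A x → v ∈ A y → 0 ≤ ⟪x - y, u - v⟫)
    {C : H → H} (hC : ∀ x y : H, 0 ≤ ⟪x - y, C x - C y⟫)
    {γ : ℝ} (hγ : 0 ≤ γ) {x y u v : H} (hu : u ∈ γ • A x) (hv : v ∈ γ • A y) :
    0 ≤ ⟪x - y, u - v + γ • (C x - C y)⟫ := by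
  rw [inner_add_right, real_inner_smul_right]
  exact add_nonneg (inner_sub_nonneg_of_mem_smul hA hγ hu hv) (mul_nonneg hγ (hC x y))

end

theorem fdrf_stmt6_general {H : Type*} [NormedAddCommGroup H] [InnerProductSpace ℝ H]
    (A : H → Set H)
    (hAmono : ∀ x y u v : H, u ∈ A x → v ∈ A y → 0 ≤ ⟪x - y, u - v⟫)
    (C : H → H)
    (hCmono : ∀ x y : H, 0 ≤ ⟪x - y, C x - C y⟫)
    (γ : ℝ) (hγ : 0 < γ)
    (z zs x y xs : H)
    (hy : (2 : ℝ) • x - z - γ • C x - y ∈ γ • A y)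
    (hxs : xs - zs - γ • C xs ∈ γ • A xs)
    (u zp : H)
    (hu : u = x - z + zs - xs)
    (hzp : zp = z + y - x - γ • (C y - C x)) :
    ‖zp - zs‖ ^ 2 ≤ ‖x - xs‖ ^ 2 - ‖x - y‖ ^ 2 + γ ^ 2 * ‖C x - C y‖ ^ 2
      - 2 * γ * ⟪C x - C y, u⟫ + ‖u‖ ^ 2 := by
  have hmono := inner_sub_add_smul_nonneg hAmono hCmono hγ.le hy hxs
  have hsum : (2 : ℝ) • x - z - γ • C x - y - (xs - zs - γ • C xs) + γ • (C y - C xs)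
      = (x - y) + (u - γ • (C x - C y)) := by
    rw [hu]; module
  have hzp' : zp - zs = (y - xs) - (u - γ • (C x - C y)) := by
    rw [hzp, hu]; module
  rw [hsum] at hmono
  have key := norm_sub_sq_le_of_inner_add_nonneg hmono
  rw [← hzp', sub_add_sub_cancel', norm_sub_smul_sq] at key
  linarith

theorem fdrf_stmt6 {H : Type*} [NormedAddCommGroup H] [InnerProductSpace ℝ H] [CompleteSpace H]
    (A : H → Set H)
    (hAmono : ∀ x y u v : H, u ∈ A x → v ∈ A y → 0 ≤ ⟪x - y, u - v⟫)
    (C : H → H)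
    (hCmono : ∀ x y : H, 0 ≤ ⟪x - y, C x - C y⟫)
    (γ : ℝ) (hγ : 0 < γ)
    (z zs x y xs : H)
    (hy : (2 : ℝ) • x - z - γ • C x - y ∈ γ • A y)
    (hxs : xs - zs - γ • C xs ∈ γ • A xs)
    (u zp : H)
    (hu : u = x - z + zs - xs)
    (hzp : zp = z + y - x - γ • (C y - C x)) :
    ‖zp - zs‖ ^ 2 ≤ ‖x - xs‖ ^ 2 - ‖x - y‖ ^ 2 + γ ^ 2 * ‖C x - C y‖ ^ 2
      - 2 * γ * ⟪C x - C y, u⟫ + ‖u‖ ^ 2 :=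
  fdrf_stmt6_general A hAmono C hCmono γ hγ z zs x y xs hy hxs u zp hu hzp
end

section
/- Let γ > 0, μ > 0, and ω ∈ (0, π). In H = ℝ², let J_A : ℝ² → ℝ² be the zero map, let B(x, y) = (γ⁻¹ cot(ω/2) y, −γ⁻¹ cot(ω/2) x), let C(x, y) = (μ y, −μ x), and let J_{γB} = (Id + γB)⁻¹, i.e., J_{γB}(x, y) = (sin²(ω/2) x − sin(ω/2)cos(ω/2) y, sin(ω/2)cos(ω/2) x + sin²(ω/2) y). Then the map T z = (Id − γC)(J_A(2 J_{γB} z − z − γ C(J_{γB} z))) + z − (Id − γC)(J_{γB} z) is the linear map T(x, y) = (a x + b y, −b x + a y) with a = (1/2)(1 + cos ω + γμ sin ω) and b = (1/2)(γμ − γμ cos ω + sin ω). -/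
/-!
Every map in sight has the shape `(x, y) ↦ (a x + b y, -b x + a y)`, i.e. it is multiplication by
`a - b i` on `ℂ ≅ ℝ²`, and such maps are closed under sums, scalar multiples and composition.
Since `J_A = 0`, the operator collapses to `T = Id - J_{γB} + γ C J_{γB}`, whose coefficients are
`1 - sin²(ω/2) + γμ sin(ω/2) cos(ω/2)` and `sin(ω/2) cos(ω/2) + γμ sin²(ω/2)`; the half-angle
formulas turn these into `a` and `b`.
-/

open Real

def rotScale (a b : ℝ) (p : ℝ × ℝ) : ℝ × ℝ :=
  (a * p.1 + b * p.2, -b * p.1 + a * p.2)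

lemma sub_add_smul_rotScale_comp (γ a b c d : ℝ) (p : ℝ × ℝ) :
    p - rotScale a b p + γ • rotScale c d (rotScale a b p)
      = rotScale (1 - a + γ * (c * a - d * b)) (-b + γ * (c * b + d * a)) p := by
  ext <;> simp only [rotScale, Prod.fst_add, Prod.snd_add, Prod.fst_sub, Prod.snd_sub,
    Prod.smul_fst, Prod.smul_snd, smul_eq_mul] <;> ring

def splittingOperator {E : Type*} [AddCommGroup E] [Module ℝ E]
    (γ : ℝ) (JA C JB : E → E) (p : E) : E :=
  (JA ((2 : ℝ) • JB p - p - γ • C (JB p)) - γ • C (JA ((2 : ℝ) • JB p - p - γ • C (JB p))))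
    + p - (JB p - γ • C (JB p))

lemma splittingOperator_of_resolvent_eq_zero {E : Type*} [AddCommGroup E] [Module ℝ E]
    (γ : ℝ) (JA C JB : E → E) (hJA : ∀ p, JA p = 0) (hC : C 0 = 0) (p : E) :
    splittingOperator γ JA C JB p = p - JB p + γ • C (JB p) := by
  rw [splittingOperator, hJA, hC, smul_zero, sub_zero, zero_add]
  abel

theorem fdrf_stmt12_general (γ μ ω : ℝ)
    (JA C JB : ℝ × ℝ → ℝ × ℝ)
    (hJA : ∀ p : ℝ × ℝ, JA p = 0)
    (hC : ∀ p : ℝ × ℝ, C p = (μ * p.2, -(μ * p.1)))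
    (hJB : ∀ p : ℝ × ℝ, JB p =
      (Real.sin (ω / 2) ^ 2 * p.1 - Real.sin (ω / 2) * Real.cos (ω / 2) * p.2,
       Real.sin (ω / 2) * Real.cos (ω / 2) * p.1 + Real.sin (ω / 2) ^ 2 * p.2)) :
    ∀ p : ℝ × ℝ,
      (JA ((2 : ℝ) • JB p - p - γ • C (JB p))
          - γ • C (JA ((2 : ℝ) • JB p - p - γ • C (JB p))))
        + p - (JB p - γ • C (JB p))
      = ((1 / 2) * (1 + Real.cos ω + γ * μ * Real.sin ω) * p.1
            + (1 / 2) * (γ * μ - γ * μ * Real.cos ω + Real.sin ω) * p.2,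
         -((1 / 2) * (γ * μ - γ * μ * Real.cos ω + Real.sin ω)) * p.1
            + (1 / 2) * (1 + Real.cos ω + γ * μ * Real.sin ω) * p.2) := by
  intro p
  set s := sin (ω / 2)
  set c := cos (ω / 2)
  have hC' : C = rotScale 0 μ := funext fun q => by simp [hC, rotScale]
  have hJB' : JB = rotScale (s ^ 2) (-(s * c)) := funext fun q => by
    rw [hJB, rotScale]; ext <;> dsimp only <;> ring
  have hcos : cos ω = 1 - 2 * s ^ 2 := by
    rw [← cos_two_mul_eq_one_sub, mul_div_cancel₀ ω two_ne_zero]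
  have hsin : sin ω = 2 * s * c := by
    rw [← sin_two_mul, mul_div_cancel₀ ω two_ne_zero]
  change splittingOperator γ JA C JB p = _
  rw [splittingOperator_of_resolvent_eq_zero γ JA C JB hJA (by simp [hC]), hC', hJB',
    sub_add_smul_rotScale_comp, rotScale, hcos, hsin]
  congr 1 <;> ring

theorem fdrf_stmt12 (γ μ ω : ℝ) (hγ : 0 < γ) (hμ : 0 < μ)
    (hω0 : 0 < ω) (hωπ : ω < Real.pi)
    (JA B C JB : ℝ × ℝ → ℝ × ℝ)
    (hJA : ∀ p : ℝ × ℝ, JA p = 0)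
    (hB : ∀ p : ℝ × ℝ, B p =
      (γ⁻¹ * (Real.cos (ω / 2) / Real.sin (ω / 2)) * p.2,
       -(γ⁻¹ * (Real.cos (ω / 2) / Real.sin (ω / 2))) * p.1))
    (hC : ∀ p : ℝ × ℝ, C p = (μ * p.2, -(μ * p.1)))
    (hJBinv : ∀ p : ℝ × ℝ, JB p + γ • B (JB p) = p)
    (hJB : ∀ p : ℝ × ℝ, JB p =
      (Real.sin (ω / 2) ^ 2 * p.1 - Real.sin (ω / 2) * Real.cos (ω / 2) * p.2,
       Real.sin (ω / 2) * Real.cos (ω / 2) * p.1 + Real.sin (ω / 2) ^ 2 * p.2)) :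
    ∀ p : ℝ × ℝ,
      (JA ((2 : ℝ) • JB p - p - γ • C (JB p))
          - γ • C (JA ((2 : ℝ) • JB p - p - γ • C (JB p))))
        + p - (JB p - γ • C (JB p))
      = ((1 / 2) * (1 + Real.cos ω + γ * μ * Real.sin ω) * p.1
            + (1 / 2) * (γ * μ - γ * μ * Real.cos ω + Real.sin ω) * p.2,
         -((1 / 2) * (γ * μ - γ * μ * Real.cos ω + Real.sin ω)) * p.1
            + (1 / 2) * (1 + Real.cos ω + γ * μ * Real.sin ω) * p.2) :=
  fdrf_stmt12_general γ μ ω JA C JB hJA hC hJB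
end

section
/- For every γ > 0 there exist μ > 0, set-valued operators A, B : ℝ² → Set ℝ² that are maximally monotone with resolvents J_{γA}, J_{γB}, and a monotone μ-Lipschitz map C : ℝ² → ℝ², with zer(A + B + C) = {x : 0 ∈ A x + B x + C x} nonempty, such that for every z₀ ∈ ℝ² with z₀ ≠ 0 the FDRF iterates defined by x_{n+1} = J_{γB} z_n, y_{n+1} = J_{γA}(2x_{n+1} − z_n − γ C x_{n+1}), z_{n+1} = z_n + y_{n+1} − x_{n+1} − γ(C y_{n+1} − C x_{n+1}) satisfy ‖z_n‖ → ∞ and ‖x_n‖ → ∞ as n → ∞. -/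
/-!
Take `A = B = 0`, whose resolvents are the identity, and `C = (2 / γ) • J` with `J` the rotation by
a right angle. Since `⟪v, J v⟫ = 0`, `C` is monotone and `(2 / γ)`-Lipschitz, and `0` is a zero of
`A + B + C`. With these choices `x_{n+1} = z_n` and, using `J ∘ J = -1`, one FDRF step is
`z ↦ -3 z - 2 J z`; as `z ⊥ J z`, it multiplies the norm by `√13 > 1`.
-/

open RealInnerProductSpace Pointwise Filter
open scoped EuclideanSpace

section MonotoneOperator

variable {E : Type*} [NormedAddCommGroup E] [InnerProductSpace ℝ E]

def IsMonotoneOperator (A : E → Set E) : Prop :=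
  ∀ x y u v, u ∈ A x → v ∈ A y → 0 ≤ ⟪x - y, u - v⟫

def IsMaximalMonotoneOperator (A : E → Set E) : Prop :=
  IsMonotoneOperator A ∧ ∀ x u, (∀ y v, v ∈ A y → 0 ≤ ⟪x - y, u - v⟫) → u ∈ A x

theorem eq_zero_of_forall_inner_sub_nonneg {x u : E} (h : ∀ y, 0 ≤ ⟪x - y, u⟫) : u = 0 := by
  have hu := h (x + u)
  rw [sub_add_cancel_left, inner_neg_left, real_inner_self_eq_norm_sq] at hu
  exact norm_eq_zero.mp (by nlinarith [norm_nonneg u])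

theorem isMaximalMonotoneOperator_zero : IsMaximalMonotoneOperator fun _ : E => ({0} : Set E) := by
  refine ⟨fun x y u v hu hv => ?_, fun x u h => ?_⟩
  · simp [Set.mem_singleton_iff.mp hu, Set.mem_singleton_iff.mp hv]
  · exact eq_zero_of_forall_inner_sub_nonneg fun y => by simpa using h y 0 rfl

theorem sub_id_mem_smul_zero (γ : ℝ) (x : E) : x - id x ∈ γ • ({0} : Set E) := by
  simp [Set.smul_set_singleton]

end MonotoneOperator

namespace Orientation

open Module

variable {E : Type*} [NormedAddCommGroup E] [InnerProductSpace ℝ E] [Fact (finrank ℝ E = 2)]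
  (o : Orientation ℝ E (Fin 2))

local notation "J" => o.rightAngleRotation

theorem inner_sub_smul_rightAngleRotation_sub (c : ℝ) (x y : E) :
    ⟪x - y, c • J x - c • J y⟫ = 0 := by
  rw [← smul_sub, ← map_sub, real_inner_smul_right, inner_rightAngleRotation_right,
    areaForm_apply_self, neg_zero, mul_zero]

theorem norm_smul_rightAngleRotation_sub (c : ℝ) (x y : E) :
    ‖c • J x - c • J y‖ = |c| * ‖x - y‖ := by
  rw [← smul_sub, ← map_sub, norm_smul, LinearIsometryEquiv.norm_map, Real.norm_eq_abs]

theorem norm_smul_sub_smul_rightAngleRotation (a b : ℝ) (z : E) :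
    ‖a • z - b • J z‖ = √(a ^ 2 + b ^ 2) * ‖z‖ := by
  rw [← Real.sqrt_sq (norm_nonneg _), ← Real.sqrt_sq (norm_nonneg z), ← Real.sqrt_mul (by positivity)]
  congr 1
  rw [norm_sub_sq_real, inner_smul_left, inner_smul_right, inner_rightAngleRotation_right,
    areaForm_apply_self, norm_smul, norm_smul, LinearIsometryEquiv.norm_map, Real.norm_eq_abs,
    Real.norm_eq_abs]
  simp only [mul_pow, sq_abs]
  ring

/-- The left side is one FDRF step from `z` for `A = B = 0` (identity resolvents) and `C = c • J`. -/
theorem fdrf_step_smul_rightAngleRotation (γ c : ℝ) (z : E) :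
    z + ((2 : ℝ) • z - z - γ • c • J z) - z
        - γ • (c • J ((2 : ℝ) • z - z - γ • c • J z) - c • J z)
      = (1 - (γ * c) ^ 2) • z - (γ * c) • J z := by
  rw [map_sub, map_sub, map_smul, map_smul, map_smul, rightAngleRotation_rightAngleRotation]
  module

end Orientation

theorem tendsto_atTop_of_succ_eq_mul {a : ℕ → ℝ} {r : ℝ} (hr : 1 < r) (h0 : 0 < a 0)
    (h : ∀ n, a (n + 1) = r * a n) : Tendsto a atTop atTop := by
  have ha : ∀ n, a n = r ^ n * a 0 := fun n => by
    induction n with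
    | zero => simp
    | succ n ih => rw [h, ih, pow_succ]; ring
  exact ((tendsto_pow_atTop_atTop_of_one_lt hr).atTop_mul_const h0).congr fun n => (ha n).symm

theorem fdrf_stmt13 (γ : ℝ) (hγ : 0 < γ) :
    ∃ μ : ℝ, 0 < μ ∧
    ∃ (A B : EuclideanSpace ℝ (Fin 2) → Set (EuclideanSpace ℝ (Fin 2)))
      (JA JB C : EuclideanSpace ℝ (Fin 2) → EuclideanSpace ℝ (Fin 2)),
      (∀ x y u v, u ∈ A x → v ∈ A y → 0 ≤ ⟪x - y, u - v⟫) ∧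
      (∀ x u, (∀ y v, v ∈ A y → 0 ≤ ⟪x - y, u - v⟫) → u ∈ A x) ∧
      (∀ x y u v, u ∈ B x → v ∈ B y → 0 ≤ ⟪x - y, u - v⟫) ∧
      (∀ x u, (∀ y v, v ∈ B y → 0 ≤ ⟪x - y, u - v⟫) → u ∈ B x) ∧
      (∀ x, x - JA x ∈ γ • A (JA x)) ∧
      (∀ x, x - JB x ∈ γ • B (JB x)) ∧
      (∀ x y, 0 ≤ ⟪x - y, C x - C y⟫) ∧
      (∀ x y, ‖C x - C y‖ ≤ μ * ‖x - y‖) ∧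
      (∃ x, (0 : EuclideanSpace ℝ (Fin 2)) ∈ A x + B x + ({C x} : Set (EuclideanSpace ℝ (Fin 2)))) ∧
      ∀ z x y : ℕ → EuclideanSpace ℝ (Fin 2), z 0 ≠ 0 →
        (∀ n, x (n + 1) = JB (z n)) →
        (∀ n, y (n + 1) = JA ((2 : ℝ) • x (n + 1) - z n - γ • C (x (n + 1)))) →
        (∀ n, z (n + 1) = z n + y (n + 1) - x (n + 1)
            - γ • (C (y (n + 1)) - C (x (n + 1)))) →
        Tendsto (fun n => ‖z n‖) atTop atTop ∧ Tendsto (fun n => ‖x n‖) atTop atTop := by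
  set o : Orientation ℝ (EuclideanSpace ℝ (Fin 2)) (Fin 2) :=
    (EuclideanSpace.basisFun (Fin 2) ℝ).toBasis.orientation
  obtain ⟨hmono, hmax⟩ := isMaximalMonotoneOperator_zero (E := EuclideanSpace ℝ (Fin 2))
  refine ⟨2 / γ, by positivity, _, _, id, id, fun v => (2 / γ) • o.rightAngleRotation v,
    hmono, hmax, hmono, hmax, sub_id_mem_smul_zero γ, sub_id_mem_smul_zero γ,
    fun x y => (o.inner_sub_smul_rightAngleRotation_sub _ x y).ge,
    fun x y => by rw [o.norm_smul_rightAngleRotation_sub, abs_of_pos (by positivity)],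
    ⟨0, by simp⟩, fun z x y hz0 hx hy hz => ?_⟩
  have hstep : ∀ n, ‖z (n + 1)‖ = √13 * ‖z n‖ := fun n => by
    rw [hz n, hy n, hx n, id, id, o.fdrf_step_smul_rightAngleRotation,
      o.norm_smul_sub_smul_rightAngleRotation, mul_div_cancel₀ _ hγ.ne']
    norm_num
  have hz_top := tendsto_atTop_of_succ_eq_mul (a := fun n => ‖z n‖)
    ((Real.lt_sqrt zero_le_one).mpr (by norm_num)) (norm_pos_iff.mpr hz0) hstep
  refine ⟨hz_top, (tendsto_add_atTop_iff_nat 1).mp ?_⟩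
  simpa only [hx, id] using hz_top
end

section
/- Let H be a real Hilbert space, let A, B : H → Set H be maximally monotone with resolvents J_{βA}, J_{γB}, let C : H → H be monotone and μ-Lipschitz with μ > 0, and assume zer(A + B + C) = {x : 0 ∈ A x + B x + C x} is nonempty. Let β > 0 and 0 < γ < β/(1 + 2μβ). Given x₀, x₋₁, u₀ ∈ H, define for n ≥ 0: x_{n+1} = J_{γB}(x_n − γ u_n − γ(2 C x_n − C x_{n−1})), y_{n+1} = J_{βA}(2x_{n+1} − x_n + β u_n), u_{n+1} = u_n + (1/β)(2x_{n+1} − x_n − y_{n+1}). Then (x_n) converges weakly to some x⋆ ∈ zer(A + B + C). -/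
/-!
Fix a KKT pair `(z, v)`, i.e. `v ∈ A z` and `-v - C z ∈ B z`. Monotonicity of `A`, `B`, `C`
between the iterates and `(z, v)`, together with the Lipschitz bound on `C`, shows that the energy
`‖x - z‖²/2 + γβ/2 ‖u - v‖² - γ⟪x - z, u - v⟫ - γ⟪x - z, C x - C x₋⟫ + γμ/2 ‖x - x₋‖²`
decreases at each step by a positive multiple of `‖x⁺ - x‖²` plus a multiple of
`‖(u⁺ - u) - (x⁺ - x)/β‖²`, and the step-size condition makes it coercive. Hence the iterates are
bounded, consecutive differences vanish, and the quadratic part of the energy converges for every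
KKT pair. In the monotonicity inequalities against arbitrary test pairs the bilinear terms cancel,
so they pass to weak limits; testing at resolvent points then shows that every weak cluster point
is a KKT pair, and Opial's lemma gives weak convergence.
-/

open RealInnerProductSpace Pointwise Filter Topology

theorem tendsto_zero_of_mul_norm_sq_le {ι E : Type*} [SeminormedAddCommGroup E] {l : Filter ι}
    {f : ι → E} {g : ι → ℝ} {c : ℝ} (hc : 0 < c) (hg : Tendsto g l (𝓝 0))
    (h : ∀ i, c * ‖f i‖ ^ 2 ≤ g i) :
    Tendsto f l (𝓝 0) := by
  rw [tendsto_zero_iff_norm_tendsto_zero]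
  refine squeeze_zero (fun i => norm_nonneg _) (fun i => ?_)
    (by simpa using ((hg.div_const c).sqrt))
  rw [← Real.sqrt_sq (norm_nonneg (f i))]
  exact Real.sqrt_le_sqrt ((le_div_iff₀' hc).mpr (h i))

section WeakLimits

variable {H : Type*} [NormedAddCommGroup H] [InnerProductSpace ℝ H] {ι : Type*} {l : Filter ι}

theorem tendsto_inner_zero_of_norm_le {f g : ι → H} {M : ℝ}
    (hf : Tendsto f l (𝓝 0)) (hg : ∀ i, ‖g i‖ ≤ M) : Tendsto (fun i => ⟪f i, g i⟫) l (𝓝 0) :=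
  squeeze_zero_norm (fun i => (norm_inner_le_norm _ _).trans
      (mul_le_mul_of_nonneg_left (hg i) (norm_nonneg _)))
    (by simpa using hf.norm.mul_const M)

def HasWeakLimit (f : ι → H) (l : Filter ι) (a : H) : Prop :=
  ∀ w : H, Tendsto (fun i => ⟪f i, w⟫) l (𝓝 ⟪a, w⟫)

theorem HasWeakLimit.add {f g : ι → H} {a b : H} (hf : HasWeakLimit f l a)
    (hg : HasWeakLimit g l b) : HasWeakLimit (fun i => f i + g i) l (a + b) := fun w => by
  simpa only [inner_add_left] using (hf w).add (hg w)

theorem HasWeakLimit.const_smul {f : ι → H} {a : H} (hf : HasWeakLimit f l a)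
    (c : ℝ) : HasWeakLimit (fun i => c • f i) l (c • a) := fun w => by
  simpa only [real_inner_smul_left] using (hf w).const_mul c

theorem HasWeakLimit.of_tendsto_sub {f g : ι → H} {a : H} (hf : HasWeakLimit f l a)
    (hfg : Tendsto (fun i => g i - f i) l (𝓝 0)) : HasWeakLimit g l a := fun w => by
  have := (hf w).add (hfg.inner (tendsto_const_nhds (x := w)))
  simpa only [← inner_add_left, add_sub_cancel, inner_zero_left, add_zero] using this

theorem hasWeakLimit_of_forall_ultrafilter {f : ι → H} {a : H}
    (h : ∀ U : Ultrafilter ι, ↑U ≤ l → HasWeakLimit f U a) : HasWeakLimit f l a :=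
  fun w => tendsto_iff_ultrafilter _ _ _ |>.mpr fun U hU => h U hU w

theorem exists_hasWeakLimit_of_norm_le [CompleteSpace H] {f : ι → H} {M : ℝ}
    (hM : ∀ i, ‖f i‖ ≤ M) (U : Ultrafilter ι) : ∃ a, HasWeakLimit f U a := by
  have hbound : ∀ w i, |⟪f i, w⟫| ≤ M * ‖w‖ := fun w i =>
    (abs_real_inner_le_norm _ _).trans (mul_le_mul_of_nonneg_right (hM i) (norm_nonneg w))
  have hex : ∀ w : H, ∃ L, Tendsto (fun i => ⟪f i, w⟫) U (𝓝 L) := fun w => by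
    obtain ⟨L, -, hL⟩ := (isCompact_Icc (a := -(M * ‖w‖)) (b := M * ‖w‖)).ultrafilter_le_nhds
      (U.map fun i => ⟪f i, w⟫)
      (le_principal_iff.mpr <| mem_map.mpr <| univ_mem' fun i => abs_le.mp (hbound w i))
    exact ⟨L, hL⟩
  choose φ hφ using hex
  let φL : H →L[ℝ] ℝ := LinearMap.mkContinuous
    { toFun := φ
      map_add' := fun w₁ w₂ => tendsto_nhds_unique (hφ _) <| by
        simpa only [inner_add_right] using (hφ w₁).add (hφ w₂)
      map_smul' := fun c w => tendsto_nhds_unique (hφ _) <| by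
        simpa only [real_inner_smul_right, RingHom.id_apply, smul_eq_mul] using
          (hφ w).const_mul c }
    M fun w => le_of_tendsto (hφ w).abs (Eventually.of_forall (hbound w))
  refine ⟨(InnerProductSpace.toDual ℝ H).symm φL, fun w => ?_⟩
  rw [InnerProductSpace.toDual_symm_apply]
  exact hφ w

theorem eq_of_hasWeakLimit_of_tendsto_dist {κ : ℝ} (hκ : 0 < κ) {X Y : ℕ → H} {a b a' b' : H}
    {L L' : ℝ} (hL : Tendsto (fun n => ‖X n - a‖ ^ 2 + κ * ‖Y n - b‖ ^ 2) atTop (𝓝 L))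
    (hL' : Tendsto (fun n => ‖X n - a'‖ ^ 2 + κ * ‖Y n - b'‖ ^ 2) atTop (𝓝 L'))
    {U V : Filter ℕ} [U.NeBot] [V.NeBot] (hU : U ≤ atTop) (hV : V ≤ atTop)
    (hXU : HasWeakLimit X U a) (hYU : HasWeakLimit Y U b)
    (hXV : HasWeakLimit X V a') (hYV : HasWeakLimit Y V b') : a = a' ∧ b = b' := by
  set c := ‖a‖ ^ 2 - ‖a'‖ ^ 2 + κ * (‖b‖ ^ 2 - ‖b'‖ ^ 2)
  let ψ : H → H → ℝ := fun p q => ⟪p, a - a'⟫ + κ * ⟪q, b - b'⟫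
  -- The difference of the two distances is affine in `(X n, Y n)`, hence weakly continuous.
  have hdiff : Tendsto (fun n => c - 2 * ψ (X n) (Y n)) atTop (𝓝 (L - L')) :=
    (hL.sub hL').congr fun n => by
      simp only [ψ, c, norm_sub_sq_real, inner_sub_right]
      ring
  have hlim : ∀ (W : Filter ℕ) p q, HasWeakLimit X W p → HasWeakLimit Y W q →
      Tendsto (fun n => c - 2 * ψ (X n) (Y n)) W (𝓝 (c - 2 * ψ p q)) := fun W p q hX hY =>
    tendsto_const_nhds.sub (((hX _).add ((hY _).const_mul κ)).const_mul 2)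
  have hψ : ψ a b = ψ a' b' := by
    have h₁ := tendsto_nhds_unique (hdiff.mono_left hU) (hlim U a b hXU hYU)
    have h₂ := tendsto_nhds_unique (hdiff.mono_left hV) (hlim V a' b' hXV hYV)
    linarith
  have hzero : ‖a - a'‖ ^ 2 + κ * ‖b - b'‖ ^ 2 = 0 := by
    have : ψ a b - ψ a' b' = ‖a - a'‖ ^ 2 + κ * ‖b - b'‖ ^ 2 := by
      simp only [ψ, ← real_inner_self_eq_norm_sq, inner_sub_left]
      ring
    linarith
  have ha : ‖a - a'‖ ^ 2 = 0 := by nlinarith [sq_nonneg ‖a - a'‖, sq_nonneg ‖b - b'‖]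
  have hb : ‖b - b'‖ ^ 2 = 0 := by nlinarith [sq_nonneg ‖a - a'‖, sq_nonneg ‖b - b'‖]
  simp only [sq_eq_zero_iff, norm_eq_zero, sub_eq_zero] at ha hb
  exact ⟨ha, hb⟩

/-- Opial's lemma, for a pair of sequences and the weighted distance `‖X - a‖² + κ ‖Y - b‖²`. -/
theorem exists_hasWeakLimit_of_tendsto_dist [CompleteSpace H] {κ : ℝ} (hκ : 0 < κ)
    {X Y : ℕ → H} (hX : ∃ M, ∀ n, ‖X n‖ ≤ M) (hY : ∃ M, ∀ n, ‖Y n‖ ≤ M) (P : H → H → Prop)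
    (hconv : ∀ a b, P a b →
      ∃ L, Tendsto (fun n => ‖X n - a‖ ^ 2 + κ * ‖Y n - b‖ ^ 2) atTop (𝓝 L))
    (hclus : ∀ U : Ultrafilter ℕ, (U : Filter ℕ) ≤ atTop → ∀ a b,
      HasWeakLimit X U a → HasWeakLimit Y U b → P a b) :
    ∃ a b, P a b ∧ HasWeakLimit X atTop a ∧ HasWeakLimit Y atTop b := by
  obtain ⟨MX, hMX⟩ := hX
  obtain ⟨MY, hMY⟩ := hY
  have cluster : ∀ U : Ultrafilter ℕ, (U : Filter ℕ) ≤ atTop →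
      ∃ a b, P a b ∧ HasWeakLimit X U a ∧ HasWeakLimit Y U b := fun U hU => by
    obtain ⟨a, ha⟩ := exists_hasWeakLimit_of_norm_le hMX U
    obtain ⟨b, hb⟩ := exists_hasWeakLimit_of_norm_le hMY U
    exact ⟨a, b, hclus U hU a b ha hb, ha, hb⟩
  obtain ⟨a, b, hab, hXa, hYb⟩ := cluster _ (Ultrafilter.of_le atTop)
  have same : ∀ V : Ultrafilter ℕ, (V : Filter ℕ) ≤ atTop →
      HasWeakLimit X V a ∧ HasWeakLimit Y V b := by
    intro V hV
    obtain ⟨a', b', hab', hXa', hYb'⟩ := cluster V hV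
    obtain ⟨L, hL⟩ := hconv a b hab
    obtain ⟨L', hL'⟩ := hconv a' b' hab'
    obtain ⟨rfl, rfl⟩ := eq_of_hasWeakLimit_of_tendsto_dist hκ hL hL' (Ultrafilter.of_le atTop) hV
      hXa hYb hXa' hYb'
    exact ⟨hXa', hYb'⟩
  exact ⟨a, b, hab, hasWeakLimit_of_forall_ultrafilter fun V hV => (same V hV).1,
    hasWeakLimit_of_forall_ultrafilter fun V hV => (same V hV).2⟩

end WeakLimits

section Operators

variable {H : Type*} [NormedAddCommGroup H] [InnerProductSpace ℝ H]

theorem exists_pos_mul_le_quadratic {a b c : ℝ} (ha : 0 < a) (hb : 0 < b)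
    (h : c ^ 2 < 4 * a * b) :
    ∃ α > 0, ∀ s t : ℝ, α * (s ^ 2 + t ^ 2) ≤ a * s ^ 2 + b * t ^ 2 - c * s * t := by
  set α := (4 * a * b - c ^ 2) / (4 * (a + b))
  have hα : 0 < α := by positivity [sub_pos.mpr h]
  have hαa : α < a := by
    rw [div_lt_iff₀ (by positivity)]
    nlinarith [sq_nonneg c]
  have hαab : 4 * (a + b) * α = 4 * a * b - c ^ 2 := mul_div_cancel₀ _ (by positivity)
  refine ⟨α, hα, fun s t => ?_⟩
  -- `4 (a - α) ((a - α) s² + (b - α) t² - c s t) = (2 (a - α) s - c t)² + 4 α² t²`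
  have key : 0 ≤ 4 * (a - α) * ((a - α) * s ^ 2 + (b - α) * t ^ 2 - c * s * t) := by
    nlinarith [sq_nonneg (2 * (a - α) * s - c * t), sq_nonneg (α * t)]
  nlinarith [(mul_nonneg_iff_of_pos_left (by linarith : 0 < 4 * (a - α))).mp key]

theorem exists_pos_mul_le_inner_quadratic {a b c : ℝ} (ha : 0 < a) (hb : 0 < b) (hc : 0 ≤ c)
    (h : c ^ 2 < 4 * a * b) :
    ∃ α > 0, ∀ p q : H, α * (‖p‖ ^ 2 + ‖q‖ ^ 2) ≤ a * ‖p‖ ^ 2 + b * ‖q‖ ^ 2 - c * ⟪p, q⟫ := by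
  obtain ⟨α, hα, hquad⟩ := exists_pos_mul_le_quadratic ha hb h
  refine ⟨α, hα, fun p q => (hquad ‖p‖ ‖q‖).trans ?_⟩
  have := mul_le_mul_of_nonneg_left (real_inner_le_norm p q) hc
  linarith

theorem abs_inner_sub_le_of_lipschitz {C : H → H} {μ : ℝ} (hμ : 0 ≤ μ)
    (hC : ∀ x y, ‖C x - C y‖ ≤ μ * ‖x - y‖) (p x y : H) :
    |⟪p, C x - C y⟫| ≤ μ / 2 * (‖p‖ ^ 2 + ‖x - y‖ ^ 2) :=
  calc |⟪p, C x - C y⟫| ≤ ‖p‖ * (μ * ‖x - y‖) :=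
        (abs_real_inner_le_norm _ _).trans (mul_le_mul_of_nonneg_left (hC x y) (norm_nonneg p))
    _ ≤ μ / 2 * (‖p‖ ^ 2 + ‖x - y‖ ^ 2) := by
        nlinarith [mul_nonneg hμ (sq_nonneg (‖p‖ - ‖x - y‖))]

def IsMonotoneOp (A : H → Set H) : Prop :=
  ∀ x y u v : H, u ∈ A x → v ∈ A y → 0 ≤ ⟪x - y, u - v⟫

def IsKKTPair (A B : H → Set H) (C : H → H) (z v : H) : Prop :=
  v ∈ A z ∧ -v - C z ∈ B z

omit [InnerProductSpace ℝ H] in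
theorem zero_mem_add_iff_exists_isKKTPair {A B : H → Set H} {C : H → H} {z : H} :
    (0 : H) ∈ A z + B z + ({C z} : Set H) ↔ ∃ v, IsKKTPair A B C z v := by
  simp only [Set.add_singleton, Set.mem_image, Set.mem_add, IsKKTPair]
  constructor
  · rintro ⟨_, ⟨v, hv, w, hw, rfl⟩, hsum⟩
    refine ⟨v, hv, ?_⟩
    rwa [show -v - C z = w by linear_combination (norm := abel) -hsum]
  · rintro ⟨v, hv, hw⟩
    exact ⟨_, ⟨v, hv, _, hw, rfl⟩, by abel⟩

/-- Minty's argument: tested at the resolvent points `JA (z + β v)` and `JB (z - γ v - γ C z)`,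
the inequalities force both points to equal `z`, which exhibits `v ∈ A z` and `-v - C z ∈ B z`. -/
theorem isKKTPair_of_forall_le {A B : H → Set H} {C : H → H} {β γ μ : ℝ} (hβ : 0 < β)
    (hγ : 0 < γ) (hγμ : γ * μ < 1) (hC : ∀ x y, ‖C x - C y‖ ≤ μ * ‖x - y‖) {JA JB : H → H}
    (hJA : ∀ x, x - JA x ∈ β • A (JA x)) (hJB : ∀ x, x - JB x ∈ γ • B (JB x)) {z v : H}
    (h : ∀ a a' b b', a' ∈ A a → b' ∈ B b → 0 ≤ ⟪z - a, v - a'⟫ + ⟪z - b, -v - b' - C b⟫) :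
    IsKKTPair A B C z v := by
  obtain ⟨a', ha', hJa⟩ := hJA (z + β • v)
  obtain ⟨b', hb', hJb⟩ := hJB (z - γ • v - γ • C z)
  set a := JA (z + β • v)
  set b := JB (z - γ • v - γ • C z)
  set q := b' + v + C z with hq_def
  have ha : z - a = β • (a' - v) := by linear_combination (norm := module) -hJa
  have hb : z - b = γ • q := by linear_combination (norm := module) -hJb
  have hCq : ⟪q, C z - C b⟫ ≤ γ * μ * ‖q‖ ^ 2 :=
    calc ⟪q, C z - C b⟫ ≤ ‖q‖ * (μ * ‖z - b‖) :=
          (real_inner_le_norm _ _).trans (mul_le_mul_of_nonneg_left (hC z b) (norm_nonneg q))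
      _ = γ * μ * ‖q‖ ^ 2 := by rw [hb, norm_smul, Real.norm_of_nonneg hγ.le]; ring
  have hineq : 0 ≤ -(β * ‖a' - v‖ ^ 2) - γ * ‖q‖ ^ 2 + γ * ⟪q, C z - C b⟫ := by
    have := h a a' b b' ha' hb'
    rw [ha, hb, show -v - b' - C b = -q + (C z - C b) by rw [hq_def]; abel,
      show v - a' = -(a' - v) by abel, real_inner_smul_left, real_inner_smul_left,
      inner_neg_right, inner_add_right, inner_neg_right, real_inner_self_eq_norm_sq,
      real_inner_self_eq_norm_sq] at this
    linarith
  have hγq := mul_le_mul_of_nonneg_left hCq hγ.le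
  have hv : ‖a' - v‖ ^ 2 = 0 := by
    nlinarith [sq_nonneg ‖a' - v‖,
      mul_nonneg (mul_nonneg hγ.le (sub_pos.mpr hγμ).le) (sq_nonneg ‖q‖)]
  have hq : ‖q‖ ^ 2 = 0 := by
    nlinarith [sq_nonneg ‖q‖, mul_nonneg hβ.le (sq_nonneg ‖a' - v‖),
      mul_pos hγ (sub_pos.mpr hγμ)]
  simp only [sq_eq_zero_iff, norm_eq_zero, sub_eq_zero] at hv hq
  have hza : z = a := by rw [← sub_eq_zero, ha, hv, sub_self, smul_zero]
  have hzb : z = b := by rw [← sub_eq_zero, hb, hq, smul_zero]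
  refine ⟨hza ▸ hv ▸ ha', ?_⟩
  rw [hq_def] at hq
  rwa [show -v - C z = b' by linear_combination (norm := module) -hq, hzb]

theorem le_of_tendsto_monotone_pairing {ι : Type*} {l : Filter ι} [l.NeBot] {A B : H → Set H}
    {C : H → H} (hA : IsMonotoneOp A) (hB : IsMonotoneOp B)
    (hC : ∀ x y, 0 ≤ ⟪x - y, C x - C y⟫) {a a' b b' : ι → H} (ha : ∀ i, a' i ∈ A (a i))
    (hb : ∀ i, b' i ∈ B (b i)) {M : ℝ} (ha'M : ∀ i, ‖a' i‖ ≤ M) (hbM : ∀ i, ‖b i‖ ≤ M)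
    (hab : Tendsto (fun i => a i - b i) l (𝓝 0))
    (hsum : Tendsto (fun i => a' i + b' i + C (b i)) l (𝓝 0))
    {z v : H} (hbz : HasWeakLimit b l z) (ha'v : HasWeakLimit a' l v)
    {p p' q q' : H} (hp : p' ∈ A p) (hq : q' ∈ B q) :
    0 ≤ ⟪z - p, v - p'⟫ + ⟪z - q, -v - q' - C q⟫ := by
  set F : H → H → ℝ := fun s t => ⟪s - p, t - p'⟫ + ⟪s - q, -t - q' - C q⟫
  -- the terms `⟪s, t⟫` cancel, so `F` is affine and passes to weak limits
  have hF : ∀ s t, F s t = ⟪s, -p' - q' - C q⟫ + ⟪t, q - p⟫ + (⟪p, p'⟫ + ⟪q, q' + C q⟫) := by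
    intro s t
    simp only [F, inner_sub_left, inner_sub_right, inner_neg_right, inner_add_right]
    simp only [real_inner_comm]
    ring
  have hsplit : ∀ i, ⟪a i - p, a' i - p'⟫ + ⟪b i - q, b' i - q'⟫ + ⟪b i - q, C (b i) - C q⟫
      = ⟪a i - b i, a' i - p'⟫ + ⟪a' i + b' i + C (b i), b i - q⟫ + F (b i) (a' i) := by
    intro i
    simp only [F, inner_sub_left, inner_sub_right, inner_neg_right, inner_add_left]
    simp only [real_inner_comm]
    ring
  have herr : Tendsto (fun i => ⟪a i - b i, a' i - p'⟫ + ⟪a' i + b' i + C (b i), b i - q⟫) l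
      (𝓝 0) := by
    simpa using (tendsto_inner_zero_of_norm_le hab fun i => (norm_sub_le (a' i) p').trans
        (add_le_add (ha'M i) le_rfl)).add
      (tendsto_inner_zero_of_norm_le hsum fun i => (norm_sub_le (b i) q).trans
        (add_le_add (hbM i) le_rfl))
  have hFlim : Tendsto (fun i => F (b i) (a' i)) l (𝓝 (F z v)) := by
    simp only [hF]
    exact ((hbz _).add (ha'v _)).add tendsto_const_nhds
  refine ge_of_tendsto' (by simpa using herr.add hFlim) fun i => ?_
  rw [← hsplit]
  have := hA _ _ _ _ (ha i) hp
  have := hB _ _ _ _ (hb i) hq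
  have := hC (b i) q
  linarith

end Operators

section FRDR

variable {H : Type*} [NormedAddCommGroup H] [InnerProductSpace ℝ H]

noncomputable def pairEnergy (γ β : ℝ) (p q : H) : ℝ :=
  ‖p‖ ^ 2 / 2 + γ * β / 2 * ‖q‖ ^ 2 - γ * ⟪p, q⟫

theorem two_mul_pairEnergy (γ β : ℝ) (p q : H) :
    2 * pairEnergy γ β p q = ‖p - γ • q‖ ^ 2 + γ * (β - γ) * ‖q‖ ^ 2 := by
  rw [pairEnergy, norm_sub_sq_real, norm_smul, real_inner_smul_right, mul_pow, Real.norm_eq_abs,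
    sq_abs]
  ring

/-- One step of the energy balance: with `w = C z`, the first three inner products are the
monotonicity pairings of `B`, `A` and `C` against `(z, v)`. -/
theorem pairEnergy_sub_pairEnergy {γ β : ℝ} (hβ : β ≠ 0) (x₁ x₂ u₀ u₁ z v b c₀ c₁ c₂ w : H)
    (hb : γ • b = x₁ - γ • u₀ - γ • ((2 : ℝ) • c₁ - c₀) - x₂) :
    pairEnergy γ β (x₁ - z) (u₀ - v) - γ * ⟪x₁ - z, c₁ - c₀⟫
      - (pairEnergy γ β (x₂ - z) (u₁ - v) - γ * ⟪x₂ - z, c₂ - c₁⟫)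
    = γ * ⟪x₂ - z, b - (-v - w)⟫ + γ * ⟪(2 : ℝ) • x₂ - x₁ - β • (u₁ - u₀) - z, u₁ - v⟫
      + γ * ⟪x₂ - z, c₂ - w⟫ + γ * ⟪x₂ - x₁, c₁ - c₀⟫
      + (1 - γ / β) / 2 * ‖x₂ - x₁‖ ^ 2 + γ * β / 2 * ‖u₁ - u₀ - β⁻¹ • (x₂ - x₁)‖ ^ 2 := by
  have hB : γ * ⟪x₂ - z, b - (-v - w)⟫ = ⟪x₂ - z, γ • b⟫ + γ * ⟪x₂ - z, v + w⟫ := by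
    rw [real_inner_smul_right, ← mul_add, ← inner_add_right]
    congr 2
    abel
  rw [hB, hb]
  simp only [pairEnergy, ← real_inner_self_eq_norm_sq, inner_sub_left, inner_sub_right,
    inner_add_right, real_inner_smul_left, real_inner_smul_right]
  simp only [real_inner_comm]
  field_simp
  ring

/-- The recursion in inclusion form; `b n ∈ B (x (n + 2))` is the element produced by the
resolvent step of `B`. -/
structure IsFRDRIterate (A B : H → Set H) (C : H → H) (β γ : ℝ) (x y u b : ℕ → H) : Prop where
  mem_B : ∀ n, b n ∈ B (x (n + 2))
  mem_A : ∀ n, u (n + 1) ∈ A (y (n + 1))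
  smul_eq : ∀ n,
    γ • b n = x (n + 1) - γ • u n - γ • ((2 : ℝ) • C (x (n + 1)) - C (x n)) - x (n + 2)
  y_eq : ∀ n, y (n + 1) = (2 : ℝ) • x (n + 2) - x (n + 1) - β • (u (n + 1) - u n)

theorem isFRDRIterate_of_resolvent {A B : H → Set H} {C : H → H} {β γ : ℝ} (hβ : 0 < β)
    {JA JB : H → H} (hJA : ∀ x, x - JA x ∈ β • A (JA x)) (hJB : ∀ x, x - JB x ∈ γ • B (JB x))
    {x y u : ℕ → H}
    (hx : ∀ n, x (n + 2) = JB (x (n + 1) - γ • u n - γ • ((2 : ℝ) • C (x (n + 1)) - C (x n))))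
    (hy : ∀ n, y (n + 1) = JA ((2 : ℝ) • x (n + 2) - x (n + 1) + β • u n))
    (hu : ∀ n, u (n + 1) = u n + (1 / β) • ((2 : ℝ) • x (n + 2) - x (n + 1) - y (n + 1))) :
    ∃ b, IsFRDRIterate A B C β γ x y u b := by
  choose b hb hb_eq using fun n =>
    hJB (x (n + 1) - γ • u n - γ • ((2 : ℝ) • C (x (n + 1)) - C (x n)))
  have hy_eq : ∀ n, y (n + 1) = (2 : ℝ) • x (n + 2) - x (n + 1) - β • (u (n + 1) - u n) := by
    intro n
    rw [hu n]
    match_scalars <;> field_simp <;> ring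
  refine ⟨b, fun n => hx n ▸ hb n, fun n => ?_, fun n => hx n ▸ hb_eq n, hy_eq⟩
  have hA := hJA ((2 : ℝ) • x (n + 2) - x (n + 1) + β • u n)
  rwa [← hy n, show (2 : ℝ) • x (n + 2) - x (n + 1) + β • u n - y (n + 1) = β • u (n + 1) by
    rw [hy_eq n]; module, Set.smul_mem_smul_set_iff₀ hβ.ne'] at hA

noncomputable def frdrEnergy (β γ μ : ℝ) (C : H → H) (x u : ℕ → H) (z v : H) (n : ℕ) : ℝ :=
  pairEnergy γ β (x (n + 1) - z) (u n - v) - γ * ⟪x (n + 1) - z, C (x (n + 1)) - C (x n)⟫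
    + γ * μ / 2 * ‖x (n + 1) - x n‖ ^ 2

theorem exists_pos_mul_le_frdrEnergy {C : H → H} {β γ μ : ℝ}
    (hC : ∀ x y, ‖C x - C y‖ ≤ μ * ‖x - y‖) (hμ : 0 ≤ μ) (hβ : 0 < β) (hγ : 0 < γ)
    (hstep : γ * (1 + μ * β) < β) :
    ∃ α > 0, ∀ (x u : ℕ → H) (z v : H) (n : ℕ),
      α * (‖x (n + 1) - z‖ ^ 2 + ‖u n - v‖ ^ 2) ≤ frdrEnergy β γ μ C x u z v n := by
  have hγμ : γ * μ < 1 := by nlinarith [mul_nonneg (mul_nonneg hγ.le hμ) hβ.le]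
  obtain ⟨α, hα, hquad⟩ := exists_pos_mul_le_inner_quadratic (H := H)
    (a := (1 - γ * μ) / 2) (b := γ * β / 2) (c := γ) (by linarith) (by positivity) hγ.le
    (by nlinarith)
  refine ⟨α, hα, fun x u z v n => (hquad _ _).trans ?_⟩
  have hCx := abs_le.mp (abs_inner_sub_le_of_lipschitz hμ hC (x (n + 1) - z) (x (n + 1)) (x n))
  have := mul_le_mul_of_nonneg_left hCx.2 hγ.le
  simp only [frdrEnergy, pairEnergy]
  nlinarith

theorem IsFRDRIterate.frdrEnergy_succ_add_le {A B : H → Set H} {C : H → H} {β γ μ : ℝ}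
    {x y u b : ℕ → H} (hs : IsFRDRIterate A B C β γ x y u b) (hA : IsMonotoneOp A)
    (hB : IsMonotoneOp B) (hCmono : ∀ x y, 0 ≤ ⟪x - y, C x - C y⟫)
    (hC : ∀ x y, ‖C x - C y‖ ≤ μ * ‖x - y‖) (hμ : 0 ≤ μ) (hβ : 0 < β) (hγ : 0 < γ) {z v : H}
    (hzv : IsKKTPair A B C z v) (n : ℕ) :
    frdrEnergy β γ μ C x u z v (n + 1)
        + ((β - γ * (1 + 2 * μ * β)) / (2 * β) * ‖x (n + 2) - x (n + 1)‖ ^ 2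
          + γ * β / 2 * ‖u (n + 1) - u n - β⁻¹ • (x (n + 2) - x (n + 1))‖ ^ 2)
      ≤ frdrEnergy β γ μ C x u z v n := by
  have hcoef : (β - γ * (1 + 2 * μ * β)) / (2 * β) = (1 - γ / β) / 2 - γ * μ := by
    field_simp
    ring
  have hid := pairEnergy_sub_pairEnergy hβ.ne' (x (n + 1)) (x (n + 2)) (u n) (u (n + 1)) z v
    (b n) (C (x n)) (C (x (n + 1))) (C (x (n + 2))) (C z) (hs.smul_eq n)
  rw [← hs.y_eq n] at hid
  have hBn := mul_nonneg hγ.le (hB _ _ _ _ (hs.mem_B n) hzv.2)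
  have hAn := mul_nonneg hγ.le (hA _ _ _ _ (hs.mem_A n) hzv.1)
  have hCn := mul_nonneg hγ.le (hCmono (x (n + 2)) z)
  have hLip := mul_le_mul_of_nonneg_left (abs_le.mp (abs_inner_sub_le_of_lipschitz hμ hC
    (x (n + 2) - x (n + 1)) (x (n + 1)) (x n))).1 hγ.le
  simp only [frdrEnergy]
  rw [hcoef]
  nlinarith

variable {A B : H → Set H} {C : H → H} {β γ μ : ℝ} {x y u b : ℕ → H} {z v : H}

theorem IsFRDRIterate.antitone_frdrEnergy (hs : IsFRDRIterate A B C β γ x y u b)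
    (hA : IsMonotoneOp A) (hB : IsMonotoneOp B) (hCmono : ∀ x y, 0 ≤ ⟪x - y, C x - C y⟫)
    (hC : ∀ x y, ‖C x - C y‖ ≤ μ * ‖x - y‖) (hμ : 0 ≤ μ) (hβ : 0 < β) (hγ : 0 < γ)
    (hstep : γ * (1 + 2 * μ * β) < β) (hzv : IsKKTPair A B C z v) :
    Antitone (frdrEnergy β γ μ C x u z v) := by
  refine antitone_nat_of_succ_le fun n =>
    le_trans ?_ (hs.frdrEnergy_succ_add_le hA hB hCmono hC hμ hβ hγ hzv n)
  have : 0 < (β - γ * (1 + 2 * μ * β)) / (2 * β) := div_pos (sub_pos.mpr hstep) (by positivity)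
  simp only [le_add_iff_nonneg_right]
  positivity

theorem IsFRDRIterate.exists_tendsto_frdrEnergy (hs : IsFRDRIterate A B C β γ x y u b)
    (hA : IsMonotoneOp A) (hB : IsMonotoneOp B) (hCmono : ∀ x y, 0 ≤ ⟪x - y, C x - C y⟫)
    (hC : ∀ x y, ‖C x - C y‖ ≤ μ * ‖x - y‖) (hμ : 0 ≤ μ) (hβ : 0 < β) (hγ : 0 < γ)
    (hstep : γ * (1 + 2 * μ * β) < β) (hzv : IsKKTPair A B C z v) :
    ∃ L, Tendsto (frdrEnergy β γ μ C x u z v) atTop (𝓝 L) := by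
  obtain ⟨α, hα, hcoer⟩ := exists_pos_mul_le_frdrEnergy hC hμ hβ hγ
    (by nlinarith [mul_nonneg (mul_nonneg hγ.le hμ) hβ.le])
  refine ⟨_, tendsto_atTop_ciInf (hs.antitone_frdrEnergy hA hB hCmono hC hμ hβ hγ hstep hzv)
    ⟨0, ?_⟩⟩
  rintro _ ⟨n, rfl⟩
  exact (mul_nonneg hα.le (by positivity)).trans (hcoer x u z v n)

theorem IsFRDRIterate.tendsto_sub_zero (hs : IsFRDRIterate A B C β γ x y u b)
    (hA : IsMonotoneOp A) (hB : IsMonotoneOp B) (hCmono : ∀ x y, 0 ≤ ⟪x - y, C x - C y⟫)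
    (hC : ∀ x y, ‖C x - C y‖ ≤ μ * ‖x - y‖) (hμ : 0 ≤ μ) (hβ : 0 < β) (hγ : 0 < γ)
    (hstep : γ * (1 + 2 * μ * β) < β) (hzv : IsKKTPair A B C z v) :
    Tendsto (fun n => x (n + 1) - x n) atTop (𝓝 0) ∧
      Tendsto (fun n => u (n + 1) - u n) atTop (𝓝 0) := by
  obtain ⟨L, hL⟩ := hs.exists_tendsto_frdrEnergy hA hB hCmono hC hμ hβ hγ hstep hzv
  have hdiff : Tendsto
      (fun n => frdrEnergy β γ μ C x u z v n - frdrEnergy β γ μ C x u z v (n + 1)) atTop (𝓝 0) := by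
    simpa using hL.sub (hL.comp (tendsto_add_atTop_nat 1))
  have hε : 0 < (β - γ * (1 + 2 * μ * β)) / (2 * β) :=
    div_pos (sub_pos.mpr hstep) (by positivity)
  have hκ : 0 < γ * β / 2 := by positivity
  have hdesc := hs.frdrEnergy_succ_add_le hA hB hCmono hC hμ hβ hγ hzv
  have hdx : Tendsto (fun n => x (n + 2) - x (n + 1)) atTop (𝓝 0) :=
    tendsto_zero_of_mul_norm_sq_le hε hdiff fun n => by
      have := mul_nonneg hκ.le (sq_nonneg ‖u (n + 1) - u n - β⁻¹ • (x (n + 2) - x (n + 1))‖)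
      linarith [hdesc n]
  have hdu : Tendsto (fun n => u (n + 1) - u n - β⁻¹ • (x (n + 2) - x (n + 1))) atTop (𝓝 0) :=
    tendsto_zero_of_mul_norm_sq_le hκ hdiff fun n => by
      have := mul_nonneg hε.le (sq_nonneg ‖x (n + 2) - x (n + 1)‖)
      linarith [hdesc n]
  refine ⟨(tendsto_add_atTop_iff_nat 1).mp hdx, ?_⟩
  simpa using hdu.add (hdx.const_smul β⁻¹)

theorem IsFRDRIterate.exists_norm_le (hs : IsFRDRIterate A B C β γ x y u b)
    (hA : IsMonotoneOp A) (hB : IsMonotoneOp B) (hCmono : ∀ x y, 0 ≤ ⟪x - y, C x - C y⟫)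
    (hC : ∀ x y, ‖C x - C y‖ ≤ μ * ‖x - y‖) (hμ : 0 ≤ μ) (hβ : 0 < β) (hγ : 0 < γ)
    (hstep : γ * (1 + 2 * μ * β) < β) (hzv : IsKKTPair A B C z v) :
    ∃ M, ∀ n, ‖x (n + 1)‖ ≤ M ∧ ‖u n‖ ≤ M := by
  obtain ⟨α, hα, hcoer⟩ := exists_pos_mul_le_frdrEnergy hC hμ hβ hγ
    (by nlinarith [mul_nonneg (mul_nonneg hγ.le hμ) hβ.le])
  have hanti := hs.antitone_frdrEnergy hA hB hCmono hC hμ hβ hγ hstep hzv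
  set R := Real.sqrt (frdrEnergy β γ μ C x u z v 0 / α)
  have hsq : ∀ n, ‖x (n + 1) - z‖ ^ 2 + ‖u n - v‖ ^ 2 ≤ frdrEnergy β γ μ C x u z v 0 / α :=
    fun n => (le_div_iff₀' hα).mpr ((hcoer x u z v n).trans (hanti (Nat.zero_le n)))
  have hle : ∀ w : H, ‖w‖ ^ 2 ≤ frdrEnergy β γ μ C x u z v 0 / α → ‖w‖ ≤ R :=
    fun w hw => (le_abs_self _).trans (Real.abs_le_sqrt hw)
  refine ⟨R + ‖z‖ + ‖v‖, fun n => ⟨?_, ?_⟩⟩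
  · have := hle _ (le_of_add_le_of_nonneg_left (hsq n) (sq_nonneg _))
    linarith [norm_le_norm_add_norm_sub' (x (n + 1)) z, norm_nonneg v]
  · have := hle _ (le_of_add_le_of_nonneg_right (hsq n) (sq_nonneg _))
    linarith [norm_le_norm_add_norm_sub' (u n) v, norm_nonneg z]

theorem IsFRDRIterate.isKKTPair_of_hasWeakLimit (hs : IsFRDRIterate A B C β γ x y u b)
    (hA : IsMonotoneOp A) (hB : IsMonotoneOp B) (hCmono : ∀ x y, 0 ≤ ⟪x - y, C x - C y⟫)
    (hC : ∀ x y, ‖C x - C y‖ ≤ μ * ‖x - y‖) (hβ : 0 < β) (hγ : 0 < γ) (hγμ : γ * μ < 1)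
    {JA JB : H → H} (hJA : ∀ x, x - JA x ∈ β • A (JA x)) (hJB : ∀ x, x - JB x ∈ γ • B (JB x))
    (hdx : Tendsto (fun n => x (n + 1) - x n) atTop (𝓝 0))
    (hdu : Tendsto (fun n => u (n + 1) - u n) atTop (𝓝 0)) {M : ℝ}
    (hM : ∀ n, ‖x (n + 1)‖ ≤ M ∧ ‖u n‖ ≤ M) {l : Filter ℕ} [l.NeBot] (hl : l ≤ atTop)
    (hxz : HasWeakLimit (fun n => x (n + 1)) l z) (huv : HasWeakLimit u l v) :
    IsKKTPair A B C z v := by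
  have hdx' : Tendsto (fun n => x (n + 2) - x (n + 1)) atTop (𝓝 0) :=
    (tendsto_add_atTop_iff_nat 1).mpr hdx
  have hdC : Tendsto (fun n => C (x (n + 1)) - C (x n)) atTop (𝓝 0) :=
    squeeze_zero_norm (fun n => hC _ _) (by simpa using hdx.norm.const_mul μ)
  have hyx : Tendsto (fun n => y (n + 1) - x (n + 2)) atTop (𝓝 0) := by
    simpa [hs.y_eq] using (hdx'.sub (hdu.const_smul β)).congr fun n => by module
  have hsum : Tendsto (fun n => u (n + 1) + b n + C (x (n + 2))) atTop (𝓝 0) := by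
    have hb : ∀ n, b n = γ⁻¹ • (γ • b n) := fun n => (inv_smul_smul₀ hγ.ne' _).symm
    have := ((hdu.sub (hdx'.const_smul γ⁻¹)).add
      (((tendsto_add_atTop_iff_nat 1).mpr hdC).sub hdC))
    simp only [smul_zero, sub_zero, add_zero] at this
    refine this.congr fun n => ?_
    rw [hb n, hs.smul_eq n]
    match_scalars <;> field_simp
    ring
  refine isKKTPair_of_forall_le hβ hγ hγμ hC hJA hJB fun p p' q q' hp hq =>
    le_of_tendsto_monotone_pairing hA hB hCmono hs.mem_A hs.mem_B (fun n => (hM (n + 1)).2)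
      (fun n => (hM (n + 1)).1) (hyx.mono_left hl) (hsum.mono_left hl)
      (hxz.of_tendsto_sub (hdx'.mono_left hl)) (huv.of_tendsto_sub (hdu.mono_left hl)) hp hq

theorem IsFRDRIterate.exists_tendsto_dist (hs : IsFRDRIterate A B C β γ x y u b)
    (hA : IsMonotoneOp A) (hB : IsMonotoneOp B) (hCmono : ∀ x y, 0 ≤ ⟪x - y, C x - C y⟫)
    (hC : ∀ x y, ‖C x - C y‖ ≤ μ * ‖x - y‖) (hμ : 0 ≤ μ) (hβ : 0 < β) (hγ : 0 < γ)
    (hstep : γ * (1 + 2 * μ * β) < β) (hdx : Tendsto (fun n => x (n + 1) - x n) atTop (𝓝 0))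
    {M : ℝ} (hM : ∀ n, ‖x (n + 1)‖ ≤ M) (hzv : IsKKTPair A B C z v) :
    ∃ L, Tendsto (fun n => ‖(x (n + 1) - γ • u n) - (z - γ • v)‖ ^ 2
      + γ * (β - γ) * ‖u n - v‖ ^ 2) atTop (𝓝 L) := by
  obtain ⟨L, hL⟩ := hs.exists_tendsto_frdrEnergy hA hB hCmono hC hμ hβ hγ hstep hzv
  have hdC : Tendsto (fun n => C (x (n + 1)) - C (x n)) atTop (𝓝 0) :=
    squeeze_zero_norm (fun n => hC _ _) (by simpa using hdx.norm.const_mul μ)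
  have hcross : Tendsto (fun n => ⟪C (x (n + 1)) - C (x n), x (n + 1) - z⟫) atTop (𝓝 0) :=
    tendsto_inner_zero_of_norm_le hdC fun n =>
      (norm_sub_le (x (n + 1)) z).trans (add_le_add (hM n) le_rfl)
  have hsq : Tendsto (fun n => ‖x (n + 1) - x n‖ ^ 2) atTop (𝓝 0) := by
    simpa using hdx.norm.pow 2
  refine ⟨2 * L, ?_⟩
  have := ((hL.add (hcross.const_mul γ)).sub (hsq.const_mul (γ * μ / 2))).const_mul 2
  simp only [mul_zero, add_zero, sub_zero] at this
  refine this.congr fun n => ?_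
  rw [show x (n + 1) - γ • u n - (z - γ • v) = x (n + 1) - z - γ • (u n - v) by module,
    ← two_mul_pairEnergy, frdrEnergy, real_inner_comm]
  ring

theorem IsFRDRIterate.exists_hasWeakLimit [CompleteSpace H]
    (hs : IsFRDRIterate A B C β γ x y u b) (hA : IsMonotoneOp A) (hB : IsMonotoneOp B)
    (hCmono : ∀ x y, 0 ≤ ⟪x - y, C x - C y⟫) (hC : ∀ x y, ‖C x - C y‖ ≤ μ * ‖x - y‖)
    (hμ : 0 ≤ μ) (hβ : 0 < β) (hγ : 0 < γ) (hstep : γ * (1 + 2 * μ * β) < β) {JA JB : H → H}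
    (hJA : ∀ x, x - JA x ∈ β • A (JA x)) (hJB : ∀ x, x - JB x ∈ γ • B (JB x))
    (hzv : IsKKTPair A B C z v) :
    ∃ z' v', IsKKTPair A B C z' v' ∧ HasWeakLimit x atTop z' := by
  obtain ⟨hdx, hdu⟩ := hs.tendsto_sub_zero hA hB hCmono hC hμ hβ hγ hstep hzv
  obtain ⟨M, hM⟩ := hs.exists_norm_le hA hB hCmono hC hμ hβ hγ hstep hzv
  have hγμ : γ * μ < 1 := by nlinarith [mul_nonneg (mul_nonneg hγ.le hμ) hβ.le]
  have hγβ : 0 < γ * (β - γ) :=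
    mul_pos hγ (by nlinarith [mul_nonneg (mul_nonneg hγ.le hμ) hβ.le])
  -- by `two_mul_pairEnergy`, the quadratic part of the energy is the weighted distance of
  -- `(x (n + 1) - γ u n, u n)` to `(z - γ v, v)`, so Opial's lemma applies to this pair
  obtain ⟨a, v', hav', hxa, huv'⟩ := exists_hasWeakLimit_of_tendsto_dist hγβ
    (X := fun n => x (n + 1) - γ • u n) (Y := u)
    ⟨M + γ * M, fun n => (norm_sub_le _ _).trans (add_le_add (hM n).1 (by
      rw [norm_smul, Real.norm_of_nonneg hγ.le]
      exact mul_le_mul_of_nonneg_left (hM n).2 hγ.le))⟩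
    ⟨M, fun n => (hM n).2⟩ (fun a v' => IsKKTPair A B C (a + γ • v') v')
    (fun a v' h => by
      simpa using
        hs.exists_tendsto_dist hA hB hCmono hC hμ hβ hγ hstep hdx (fun n => (hM n).1) h)
    (fun U hU a v' hxa huv' => hs.isKKTPair_of_hasWeakLimit hA hB hCmono hC hβ hγ hγμ hJA hJB
      hdx hdu hM hU (by simpa using hxa.add (huv'.const_smul γ)) huv')
  refine ⟨a + γ • v', v', hav', fun w => (tendsto_add_atTop_iff_nat 1).mp ?_⟩
  simpa using (hxa.add (huv'.const_smul γ)) w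

end FRDR

/-- Here `x n` is the paper's `x_{n-1}` (so `x 0 = x₋₁`, `x 1 = x₀`), while `u n` and `y n` are
the paper's `u_n` and `y_n`. -/
theorem fdrf_stmt14_general {H : Type*} [NormedAddCommGroup H] [InnerProductSpace ℝ H] [CompleteSpace H]
    (A B : H → Set H)
    (hAmono : ∀ x y u v : H, u ∈ A x → v ∈ A y → 0 ≤ ⟪x - y, u - v⟫)
    (hBmono : ∀ x y u v : H, u ∈ B x → v ∈ B y → 0 ≤ ⟪x - y, u - v⟫)
    (μ β γ : ℝ) (hμ : 0 < μ) (hβ : 0 < β) (hγ0 : 0 < γ) (hγ : γ < β / (1 + 2 * μ * β))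
    (JA JB : H → H)
    (hJA : ∀ x : H, x - JA x ∈ β • A (JA x))
    (hJB : ∀ x : H, x - JB x ∈ γ • B (JB x))
    (C : H → H)
    (hCmono : ∀ x y : H, 0 ≤ ⟪x - y, C x - C y⟫)
    (hClip : ∀ x y : H, ‖C x - C y‖ ≤ μ * ‖x - y‖)
    (hzer : ∃ x : H, (0 : H) ∈ A x + B x + ({C x} : Set H))
    (x y u : ℕ → H)
    (hx : ∀ n, x (n + 2) = JB (x (n + 1) - γ • u n - γ • ((2 : ℝ) • C (x (n + 1)) - C (x n))))
    (hy : ∀ n, y (n + 1) = JA ((2 : ℝ) • x (n + 2) - x (n + 1) + β • u n))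
    (hu : ∀ n, u (n + 1) = u n + (1 / β) • ((2 : ℝ) • x (n + 2) - x (n + 1) - y (n + 1))) :
    ∃ xs : H, (0 : H) ∈ A xs + B xs + ({C xs} : Set H) ∧
      ∀ w : H, Tendsto (fun n => ⟪x n, w⟫) atTop (𝓝 ⟪xs, w⟫) := by
  obtain ⟨b, hs⟩ := isFRDRIterate_of_resolvent hβ hJA hJB hx hy hu
  obtain ⟨z, v, hzv⟩ : ∃ z v, IsKKTPair A B C z v := by
    obtain ⟨z, hz⟩ := hzer
    exact ⟨z, zero_mem_add_iff_exists_isKKTPair.mp hz⟩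
  have hstep : γ * (1 + 2 * μ * β) < β := (lt_div_iff₀ (by positivity)).mp hγ
  obtain ⟨xs, vs, hkkt, hlim⟩ := hs.exists_hasWeakLimit hAmono hBmono hCmono hClip hμ.le hβ hγ0
    hstep hJA hJB hzv
  exact ⟨xs, zero_mem_add_iff_exists_isKKTPair.mpr ⟨vs, hkkt⟩, hlim⟩

/-- FRDR convergence. Here `x n` denotes the paper's `x_{n-1}` (so `x 0 = x₋₁`,
`x 1 = x₀`), while `u n` and `y n` match the paper's `u_n` and `y_n`. -/
theorem fdrf_stmt14 {H : Type*} [NormedAddCommGroup H] [InnerProductSpace ℝ H] [CompleteSpace H]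
    (A B : H → Set H)
    (hAmono : ∀ x y u v : H, u ∈ A x → v ∈ A y → 0 ≤ ⟪x - y, u - v⟫)
    (hAmax : ∀ x u : H, (∀ y v : H, v ∈ A y → 0 ≤ ⟪x - y, u - v⟫) → u ∈ A x)
    (hBmono : ∀ x y u v : H, u ∈ B x → v ∈ B y → 0 ≤ ⟪x - y, u - v⟫)
    (hBmax : ∀ x u : H, (∀ y v : H, v ∈ B y → 0 ≤ ⟪x - y, u - v⟫) → u ∈ B x)
    (μ β γ : ℝ) (hμ : 0 < μ) (hβ : 0 < β) (hγ0 : 0 < γ) (hγ : γ < β / (1 + 2 * μ * β))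
    (JA JB : H → H)
    (hJA : ∀ x : H, x - JA x ∈ β • A (JA x))
    (hJB : ∀ x : H, x - JB x ∈ γ • B (JB x))
    (C : H → H)
    (hCmono : ∀ x y : H, 0 ≤ ⟪x - y, C x - C y⟫)
    (hClip : ∀ x y : H, ‖C x - C y‖ ≤ μ * ‖x - y‖)
    (hzer : ∃ x : H, (0 : H) ∈ A x + B x + ({C x} : Set H))
    (x y u : ℕ → H)
    (hx : ∀ n, x (n + 2) = JB (x (n + 1) - γ • u n - γ • ((2 : ℝ) • C (x (n + 1)) - C (x n))))
    (hy : ∀ n, y (n + 1) = JA ((2 : ℝ) • x (n + 2) - x (n + 1) + β • u n))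
    (hu : ∀ n, u (n + 1) = u n + (1 / β) • ((2 : ℝ) • x (n + 2) - x (n + 1) - y (n + 1))) :
    ∃ xs : H, (0 : H) ∈ A xs + B xs + ({C xs} : Set H) ∧
      ∀ w : H, Tendsto (fun n => ⟪x n, w⟫) atTop (𝓝 ⟪xs, w⟫) :=
  fdrf_stmt14_general A B hAmono hBmono μ β γ hμ hβ hγ0 hγ JA JB hJA hJB C hCmono hClip hzer x y u
    hx hy hu
end

section
/- Let H be a real Hilbert space, let C : H → H be μ-Lipschitz with μ > 0, let β > 0 and 0 < γ < β/(1 + 2μβ). Then for all x, x₋, u, u₋, x⋆, u⋆ ∈ H, defining N(p, w) = (1/γ)‖p‖² − 2⟪p, w⟫ + β‖w‖² and V = N(x − x⋆, u − u⋆) + (1/2) N(x − x₋, u − u₋) + 2⟪C x − C x₋, x⋆ − x⟫, one has V ≥ (1/2) N(x − x⋆, u − u⋆). -/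
/-! With `a = ‖x - x⋆‖`, `b = ‖x - x₋‖`, Young's inequality gives `N(p, w) ≥ (1/γ - 1/β)‖p‖²`,
and the step-size condition says exactly that `1/γ - 1/β > 2μ`. The coupling term is at least
`-2μab` by Cauchy–Schwarz and the Lipschitz bound, so `V - N(x - x⋆, u - u⋆)/2` is at least
`μa² + μb² - 2μab = μ(a - b)² ≥ 0`. -/

open RealInnerProductSpace

section

variable {H : Type*} [NormedAddCommGroup H] [InnerProductSpace ℝ H]

theorem two_mul_inner_le_inv_mul_add_mul {β : ℝ} (hβ : 0 < β) (p w : H) :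
    2 * ⟪p, w⟫ ≤ β⁻¹ * ‖p‖ ^ 2 + β * ‖w‖ ^ 2 := by
  have hsq : 0 ≤ β⁻¹ * (‖p‖ - β * ‖w‖) ^ 2 := by positivity
  have hexpand : β⁻¹ * (‖p‖ - β * ‖w‖) ^ 2
      = β⁻¹ * ‖p‖ ^ 2 + β * ‖w‖ ^ 2 - 2 * (‖p‖ * ‖w‖) := by
    field_simp
    ring
  linarith [real_inner_le_norm p w]

theorem inv_sub_inv_mul_sq_le_quadratic {β γ : ℝ} (hβ : 0 < β) (p w : H) :
    (1 / γ - β⁻¹) * ‖p‖ ^ 2 ≤ (1 / γ) * ‖p‖ ^ 2 - 2 * ⟪p, w⟫ + β * ‖w‖ ^ 2 := by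
  linarith [two_mul_inner_le_inv_mul_add_mul hβ p w]

theorem neg_inner_sub_le_of_lipschitz {C : H → H} {μ : ℝ}
    (hC : ∀ x y : H, ‖C x - C y‖ ≤ μ * ‖x - y‖) (x y z : H) :
    -⟪C x - C y, z - x⟫ ≤ μ * ‖x - y‖ * ‖x - z‖ := by
  calc -⟪C x - C y, z - x⟫ = ⟪C x - C y, x - z⟫ := by
        rw [← inner_neg_right, neg_sub]
    _ ≤ ‖C x - C y‖ * ‖x - z‖ := real_inner_le_norm _ _
    _ ≤ μ * ‖x - y‖ * ‖x - z‖ := by gcongr; exact hC x y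

end

theorem two_mul_le_inv_sub_inv_of_lt_div {μ β γ : ℝ} (hμ : 0 ≤ μ) (hβ : 0 < β) (hγ0 : 0 < γ)
    (hγ : γ < β / (1 + 2 * μ * β)) : 2 * μ ≤ 1 / γ - β⁻¹ := by
  have hden : 0 < 1 + 2 * μ * β := by positivity
  have hγβ : γ * (1 + 2 * μ * β) < β := (lt_div_iff₀ hden).mp hγ
  have hgap : 1 / γ - β⁻¹ - 2 * μ = (β - γ * (1 + 2 * μ * β)) / (γ * β) := by
    field_simp
    ring
  have : 0 ≤ (β - γ * (1 + 2 * μ * β)) / (γ * β) :=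
    div_nonneg (sub_nonneg.mpr hγβ.le) (by positivity)
  linarith

theorem fdrf_stmt17_general {H : Type*} [NormedAddCommGroup H] [InnerProductSpace ℝ H]
    (C : H → H) (μ β γ : ℝ) (hμ : 0 < μ)
    (hClip : ∀ x y : H, ‖C x - C y‖ ≤ μ * ‖x - y‖)
    (hβ : 0 < β) (hγ0 : 0 < γ) (hγ : γ < β / (1 + 2 * μ * β))
    (N : H → H → ℝ)
    (hN : ∀ p w : H, N p w = (1 / γ) * ‖p‖ ^ 2 - 2 * ⟪p, w⟫ + β * ‖w‖ ^ 2) :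
    ∀ x xm u um xs us : H,
      (1 / 2) * N (x - xs) (u - us) ≤
        N (x - xs) (u - us) + (1 / 2) * N (x - xm) (u - um)
          + 2 * ⟪C x - C xm, xs - x⟫ := by
  have hcoef := two_mul_le_inv_sub_inv_of_lt_div hμ.le hβ hγ0 hγ
  have hN_ge : ∀ p w : H, 2 * μ * ‖p‖ ^ 2 ≤ N p w := fun p w => by
    rw [hN]
    exact (mul_le_mul_of_nonneg_right hcoef (sq_nonneg _)).trans
      (inv_sub_inv_mul_sq_le_quadratic hβ p w)
  intro x xm u um xs us
  have h₁ := hN_ge (x - xs) (u - us)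
  have h₂ := hN_ge (x - xm) (u - um)
  have hcoupling := neg_inner_sub_le_of_lipschitz hClip x xm xs
  have hsq : 0 ≤ μ * (‖x - xs‖ - ‖x - xm‖) ^ 2 := by positivity
  nlinarith

theorem fdrf_stmt17 {H : Type*} [NormedAddCommGroup H] [InnerProductSpace ℝ H] [CompleteSpace H]
    (C : H → H) (μ β γ : ℝ) (hμ : 0 < μ)
    (hClip : ∀ x y : H, ‖C x - C y‖ ≤ μ * ‖x - y‖)
    (hβ : 0 < β) (hγ0 : 0 < γ) (hγ : γ < β / (1 + 2 * μ * β))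
    (N : H → H → ℝ)
    (hN : ∀ p w : H, N p w = (1 / γ) * ‖p‖ ^ 2 - 2 * ⟪p, w⟫ + β * ‖w‖ ^ 2) :
    ∀ x xm u um xs us : H,
      (1 / 2) * N (x - xs) (u - us) ≤
        N (x - xs) (u - us) + (1 / 2) * N (x - xm) (u - um)
          + 2 * ⟪C x - C xm, xs - x⟫ :=
  fdrf_stmt17_general C μ β γ hμ hClip hβ hγ0 hγ N hN
end
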